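/- Dual vertex degree estimate: if G has at least one edge, then every eigenvalue μ of the Kirchhoff Laplacian H₀ of G satisfies μ ≤ r − 1/r, where r = 1 + max over all edges {a,b} of G of (deg(a) + deg(b)), the maximum being over the sums of the two vertex degrees of the endpoints of an edge. -/

import Mathlib

/-!
Take an eigenvector `w` for `μ`, a vertex `u` where `|w|` is maximal, and a neighbour `v` of `u`
where `|w|` is maximal among the neighbours of `u`. The eigenvalue equations at `u` and `v` give
`|μ - deg u| |w u| ≤ deg u |w v|` and `|μ - deg v| |w v| ≤ deg v |w u|`; multiplying them shows
`μ ≤ deg u + deg v` (the Anderson–Morley bound). Finally `s ≤ (1 + s) - 1 / (1 + s)` for `s ≥ 0`.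
-/

open Matrix

variable {V : Type*} [Fintype V] [DecidableEq V] (G : SimpleGraph V) [DecidableRel G.Adj]

/-- The Kirchhoff Laplacian of `G`: diagonal degree matrix minus adjacency matrix. -/
def kirchhoff : Matrix V V ℝ :=
  Matrix.diagonal (fun u => (G.degree u : ℝ)) - G.adjMatrix ℝ

/-- The sum of the degrees of the two endpoints of an edge. -/
def edgeDegSum (f : Sym2 V) : ℕ :=
  Sym2.lift ⟨fun a b => G.degree a + G.degree b, fun a b => by dsimp only; rw [add_comm]⟩ f

/-- For `a, b ≥ 0` and `μ > a + b` we have `(μ - a)(μ - b) > ab`, so the product of the two bounds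
is contradictory. -/
theorem le_add_of_abs_sub_mul_le {μ a b p q : ℝ} (ha : 0 ≤ a) (hb : 0 ≤ b) (hp : 0 < p)
    (hq : 0 ≤ q) (hpq : |μ - a| * p ≤ a * q) (hqp : |μ - b| * q ≤ b * p) : μ ≤ a + b := by
  by_contra! h
  rw [abs_of_pos (by linarith)] at hpq
  rw [abs_of_pos (by linarith)] at hqp
  nlinarith [mul_le_mul hpq hqp (by nlinarith) (by positivity), mul_pos hp hp]

theorem le_one_add_sub_one_div {s : ℝ} (hs : 0 ≤ s) : s ≤ (1 + s) - 1 / (1 + s) := by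
  have : 1 / (1 + s) ≤ 1 := by rw [div_le_one (by linarith)]; linarith
  linarith

namespace SimpleGraph

theorem kirchhoff_mulVec_apply (w : V → ℝ) (u : V) :
    (kirchhoff G *ᵥ w) u = G.degree u * w u - ∑ y ∈ G.neighborFinset u, w y := by
  rw [kirchhoff, sub_mulVec, Pi.sub_apply, mulVec_diagonal, adjMatrix_mulVec_apply]

theorem abs_sub_degree_mul_le_of_mulVec_eq {w : V → ℝ} {μ c : ℝ}
    (hw : kirchhoff G *ᵥ w = μ • w) {u : V} (hc : ∀ y ∈ G.neighborFinset u, |w y| ≤ c) :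
    |μ - G.degree u| * |w u| ≤ G.degree u * c := by
  have heq : (μ - G.degree u) * w u = -∑ y ∈ G.neighborFinset u, w y := by
    have := congrFun hw u
    rw [kirchhoff_mulVec_apply, Pi.smul_apply, smul_eq_mul] at this
    linarith
  calc |μ - G.degree u| * |w u| = |∑ y ∈ G.neighborFinset u, w y| := by
        rw [← abs_mul, heq, abs_neg]
    _ ≤ ∑ y ∈ G.neighborFinset u, |w y| := Finset.abs_sum_le_sum_abs _ _
    _ ≤ G.degree u * c := by
        simpa [card_neighborFinset_eq_degree] using Finset.sum_le_card_nsmul _ _ _ hc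

theorem kirchhoff_eigenvalue_le_sup_edgeDegSum {w : V → ℝ} {μ : ℝ} (hw0 : w ≠ 0)
    (hw : kirchhoff G *ᵥ w = μ • w) : μ ≤ (G.edgeFinset.sup (edgeDegSum G) : ℕ) := by
  obtain ⟨i, hi⟩ := Function.ne_iff.mp hw0
  have : Nonempty V := ⟨i⟩
  obtain ⟨u, hu⟩ := Finite.exists_max fun x => |w x|
  have hwu : 0 < |w u| := (abs_pos.mpr hi).trans_le (hu i)
  rcases (G.neighborFinset u).eq_empty_or_nonempty with hN | hN
  · have hdeg : G.degree u = 0 := by rw [← card_neighborFinset_eq_degree, hN, Finset.card_empty]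
    have hbound := G.abs_sub_degree_mul_le_of_mulVec_eq (u := u) (c := 0) hw (by simp [hN])
    rw [hdeg, Nat.cast_zero, zero_mul, sub_zero] at hbound
    rw [abs_nonpos_iff.mp (nonpos_of_mul_nonpos_left hbound hwu)]
    positivity
  obtain ⟨v, huv, hv⟩ := (G.neighborFinset u).exists_max_image (fun x => |w x|) hN
  have hμ : μ ≤ G.degree u + G.degree v :=
    le_add_of_abs_sub_mul_le (Nat.cast_nonneg _) (Nat.cast_nonneg _) hwu (abs_nonneg _)
      (G.abs_sub_degree_mul_le_of_mulVec_eq hw hv)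
      (G.abs_sub_degree_mul_le_of_mulVec_eq hw fun y _ => hu y)
  have hedge : s(u, v) ∈ G.edgeFinset := G.mem_edgeFinset.mpr ((G.mem_neighborFinset u v).mp huv)
  have hsup : G.degree u + G.degree v ≤ G.edgeFinset.sup (edgeDegSum G) :=
    Finset.le_sup (f := edgeDegSum G) hedge
  exact hμ.trans (mod_cast hsup)

end SimpleGraph

theorem dual_vertex_estimate (μ : ℝ)
    (hμ : ∃ w : V → ℝ, w ≠ 0 ∧ (kirchhoff G).mulVec w = μ • w) :
    μ ≤ (1 + ((G.edgeFinset.sup (edgeDegSum G) : ℕ) : ℝ))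
        - 1 / (1 + ((G.edgeFinset.sup (edgeDegSum G) : ℕ) : ℝ)) := by
  obtain ⟨w, hw0, hw⟩ := hμ
  exact (G.kirchhoff_eigenvalue_le_sup_edgeDegSum hw0 hw).trans
    (le_one_add_sub_one_div (Nat.cast_nonneg _))
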